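/- arXiv:2107.08884 — 3 statements merged into one kernel-verified Lean document; each statement's English description precedes it below -/
import Mathlib

section
/- Constant-rate optimality in the degenerate case (BT-problem): Let D = ∑_{n=1}^N D_n and suppose D_n ≤ (D/t_N) T_n for every n = 1, …, N. Then the constant rate vector with r_n = D/t_N for all n satisfies the transmission constraints, and it is optimal for problem (P2b): every rate vector r satisfying the transmission constraints has energy E(r) ≥ (e^{D/(B t_N)} − 1)(σ²/h) t_N. -/
/-- Energy consumption of a rate vector `r` over the `N` epochs determined by the
task instants `t`, with epoch lengths `T n = t n − t (n−1)`. -/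
noncomputable def energyP2b (B σ2 h : ℝ) (t : ℕ → ℝ) (N : ℕ) (r : ℕ → ℝ) : ℝ :=
  ∑ n ∈ Finset.Icc 1 N, (Real.exp (r n / B) - 1) * (σ2 / h) * (t n - t (n - 1))

/-- A rate vector is feasible for problem (P2b): nonnegative rates satisfying the
data transmission constraints `∑_{n=1}^j r_n T_n ≥ ∑_{n=1}^j D_n` for all `j = 1, …, N`. -/
def FeasibleP2b (t D : ℕ → ℝ) (N : ℕ) (r : ℕ → ℝ) : Prop :=
  (∀ n ∈ Finset.Icc 1 N, 0 ≤ r n) ∧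
  (∀ j ∈ Finset.Icc 1 N,
    ∑ n ∈ Finset.Icc 1 j, D n ≤ ∑ n ∈ Finset.Icc 1 j, r n * (t n - t (n - 1)))


/-! The constant rate is feasible by summing the degeneracy hypothesis over the first `j`
epochs. For optimality, bound `e^{r_n/B}` below by the tangent line of `exp` at
`D/(B t_N)` and sum against the epoch lengths `T_n`: since `∑ T_n = t_N`, the constant part
is the energy of the constant policy, and the linear part is nonnegative by the last
transmission constraint `∑ r_n T_n ≥ D`. -/

open Finset Real

theorem Finset.sum_Icc_one_sub_pred {M : Type*} [AddCommGroup M] (f : ℕ → M) (j : ℕ) :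
    ∑ n ∈ Icc 1 j, (f n - f (n - 1)) = f j - f 0 := by
  induction j with
  | zero => simp
  | succ k ih =>
    rw [← insert_Icc_right_eq_Icc_add_one (by omega), sum_insert (by simp), ih,
      Nat.add_sub_cancel]
    abel

theorem Real.exp_mul_sub_add_one_le_exp (a x : ℝ) : exp a * (x - a + 1) ≤ exp x := by
  calc exp a * (x - a + 1) ≤ exp a * exp (x - a) := by gcongr; exact add_one_le_exp _
    _ = exp x := by rw [← exp_add, add_sub_cancel]

-- Jensen's inequality for `exp` with unnormalised weights, via the tangent line at `a`.
theorem Real.exp_sub_one_mul_sum_le {ι : Type*} (s : Finset ι) (T x : ι → ℝ) {a : ℝ}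
    (hT : ∀ i ∈ s, 0 ≤ T i) (hx : a * ∑ i ∈ s, T i ≤ ∑ i ∈ s, x i * T i) :
    (exp a - 1) * ∑ i ∈ s, T i ≤ ∑ i ∈ s, (exp (x i) - 1) * T i := by
  have htangent : ∀ i ∈ s,
      (exp a - 1) * T i + exp a * (x i * T i - a * T i) ≤ (exp (x i) - 1) * T i := by
    intro i hi
    nlinarith [exp_mul_sub_add_one_le_exp a (x i), hT i hi]
  calc (exp a - 1) * ∑ i ∈ s, T i
      ≤ (exp a - 1) * ∑ i ∈ s, T i + exp a * (∑ i ∈ s, x i * T i - a * ∑ i ∈ s, T i) :=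
        le_add_of_nonneg_right (mul_nonneg (exp_pos a).le (sub_nonneg.2 hx))
    _ = ∑ i ∈ s, ((exp a - 1) * T i + exp a * (x i * T i - a * T i)) := by
        rw [sum_add_distrib, ← mul_sum, ← mul_sum, sum_sub_distrib, ← mul_sum]
    _ ≤ ∑ i ∈ s, (exp (x i) - 1) * T i := sum_le_sum htangent

theorem energyP2b_eq_mul_sum (B σ2 h : ℝ) (t : ℕ → ℝ) (N : ℕ) (r : ℕ → ℝ) :
    energyP2b B σ2 h t N r =
      σ2 / h * ∑ n ∈ Icc 1 N, (exp (r n / B) - 1) * (t n - t (n - 1)) := by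
  rw [energyP2b, mul_sum]
  exact sum_congr rfl fun n _ => by ring

theorem FeasibleP2b.sum_le {t D r : ℕ → ℝ} {N : ℕ} (hr : FeasibleP2b t D N r) :
    ∑ n ∈ Icc 1 N, D n ≤ ∑ n ∈ Icc 1 N, r n * (t n - t (n - 1)) := by
  rcases N.eq_zero_or_pos with rfl | hN
  · simp
  · exact hr.2 N (by simp [Nat.one_le_iff_ne_zero, hN.ne'])

theorem FeasibleP2b.div_mul_le {t D r : ℕ → ℝ} {N : ℕ} {B : ℝ} (hr : FeasibleP2b t D N r)
    (hB : 0 ≤ B) (hD : 0 ≤ ∑ n ∈ Icc 1 N, D n) :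
    (∑ n ∈ Icc 1 N, D n) / (B * t N) * t N ≤ ∑ n ∈ Icc 1 N, r n / B * (t n - t (n - 1)) :=
  calc (∑ n ∈ Icc 1 N, D n) / (B * t N) * t N = (∑ n ∈ Icc 1 N, D n) / B * (t N / t N) := by
        ring
    _ ≤ (∑ n ∈ Icc 1 N, D n) / B := mul_le_of_le_one_right (by positivity) (div_self_le_one _)
    _ ≤ (∑ n ∈ Icc 1 N, r n * (t n - t (n - 1))) / B :=
        div_le_div_of_nonneg_right hr.sum_le hB
    _ = ∑ n ∈ Icc 1 N, r n / B * (t n - t (n - 1)) := by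
        rw [sum_div]; exact sum_congr rfl fun n _ => by ring

theorem feasibleP2b_const {t D : ℕ → ℝ} {N : ℕ} {c : ℝ} (hc : 0 ≤ c)
    (hD : ∀ n ∈ Icc 1 N, D n ≤ c * (t n - t (n - 1))) :
    FeasibleP2b t D N (fun _ => c) :=
  ⟨fun _ _ => hc, fun _ hj => sum_le_sum fun n hn =>
    hD n (Icc_subset_Icc_right (mem_Icc.1 hj).2 hn)⟩

theorem constant_rate_optimal_BT_general
    (N : ℕ) (t D : ℕ → ℝ) (B σ2 h : ℝ)
    (hB : 0 < B) (hσ2 : 0 < σ2) (hh : 0 < h)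
    (ht0 : t 0 = 0) (ht : ∀ n, n < N → t n < t (n + 1))
    (hD : ∀ n ∈ Finset.Icc 1 N, 0 ≤ D n)
    (hdeg : ∀ n ∈ Finset.Icc 1 N,
      D n ≤ (∑ m ∈ Finset.Icc 1 N, D m) / t N * (t n - t (n - 1))) :
    FeasibleP2b t D N (fun _ => (∑ m ∈ Finset.Icc 1 N, D m) / t N) ∧
    ∀ r, FeasibleP2b t D N r →
      (Real.exp ((∑ m ∈ Finset.Icc 1 N, D m) / (B * t N)) - 1) * (σ2 / h) * t N
        ≤ energyP2b B σ2 h t N r := by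
  set S := ∑ m ∈ Icc 1 N, D m
  have hT : ∀ n ∈ Icc 1 N, 0 ≤ t n - t (n - 1) := fun n hn => by
    have := ht (n - 1) (by grind)
    rw [Nat.sub_add_cancel (mem_Icc.1 hn).1] at this
    linarith
  have hsumT : ∑ n ∈ Icc 1 N, (t n - t (n - 1)) = t N := by
    rw [sum_Icc_one_sub_pred, ht0, sub_zero]
  have htN : 0 ≤ t N := hsumT ▸ sum_nonneg hT
  have hS : 0 ≤ S := sum_nonneg hD
  refine ⟨feasibleP2b_const (div_nonneg hS htN) hdeg, fun r hr => ?_⟩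
  calc (exp (S / (B * t N)) - 1) * (σ2 / h) * t N
      = σ2 / h * ((exp (S / (B * t N)) - 1) * ∑ n ∈ Icc 1 N, (t n - t (n - 1))) := by
        rw [hsumT]; ring
    _ ≤ σ2 / h * ∑ n ∈ Icc 1 N, (exp (r n / B) - 1) * (t n - t (n - 1)) := by
        gcongr
        exact exp_sub_one_mul_sum_le _ _ (fun n => r n / B) hT (hsumT ▸ hr.div_mul_le hB.le hS)
    _ = energyP2b B σ2 h t N r := (energyP2b_eq_mul_sum ..).symm

/-- Constant-rate optimality in the degenerate case (BT-problem): if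
`D_n ≤ (D/t_N) T_n` for every `n` (where `D = ∑_{n=1}^N D_n`), then the constant
rate vector `r_n = D/t_N` satisfies the transmission constraints, and every rate
vector satisfying them consumes at least the energy
`(e^{D/(B t_N)} − 1)(σ²/h) t_N` of this constant policy. -/
theorem constant_rate_optimal_BT
    (N : ℕ) (hN : 1 ≤ N) (t D : ℕ → ℝ) (B σ2 h : ℝ)
    (hB : 0 < B) (hσ2 : 0 < σ2) (hh : 0 < h)
    (ht0 : t 0 = 0) (ht : ∀ n, n < N → t n < t (n + 1))
    (hD : ∀ n ∈ Finset.Icc 1 N, 0 ≤ D n)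
    (hdeg : ∀ n ∈ Finset.Icc 1 N,
      D n ≤ (∑ m ∈ Finset.Icc 1 N, D m) / t N * (t n - t (n - 1))) :
    FeasibleP2b t D N (fun _ => (∑ m ∈ Finset.Icc 1 N, D m) / t N) ∧
    ∀ r, FeasibleP2b t D N r →
      (Real.exp ((∑ m ∈ Finset.Icc 1 N, D m) / (B * t N)) - 1) * (σ2 / h) * t N
        ≤ energyP2b B σ2 h t N r :=
  constant_rate_optimal_BT_general N t D B σ2 h hB hσ2 hh ht0 ht hD hdeg
end

section
/- Constant-rate optimality in the degenerate limited-buffer case: Let D = ∑_{n=1}^N D_n and suppose that for every j = 1, …, N, ∑_{n=1}^j D_n ≤ (D/t_N) t_j ≤ ∑_{n=0}^{j−1} D_n + D_max. Then the constant rate vector with r_n = D/t_N for all n is feasible for the limited-buffer problem (it satisfies both the transmission and the buffer constraints), and it minimizes the energy E among all feasible rate vectors: every feasible r has E(r) ≥ (e^{D/(B t_N)} − 1)(σ²/h) t_N. -/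
/-!
Since the epoch lengths telescope, the constant rate `D / t_N` has delivered `(D / t_N) t_j` by
time `t_j`, and the hypotheses say exactly that this lies between the two cumulative bounds. For optimality,
the energy is an epoch-length weighted sum of `exp (r_n / B)`, and the weights sum to `t_N`; by
Jensen's inequality for `exp` it is at least `t_N exp(∑ r_n T_n / (B t_N))`, and the transmission
constraint at `j = N` bounds `∑ r_n T_n` below by `D`.
-/

/-- Energy consumption of a rate vector `r` over the `N` epochs determined by the
task instants `t`, with epoch lengths `T n = t n − t (n−1)`. -/
noncomputable def energyLB (B σ2 h : ℝ) (t : ℕ → ℝ) (N : ℕ) (r : ℕ → ℝ) : ℝ :=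
  ∑ n ∈ Finset.Icc 1 N, (Real.exp (r n / B) - 1) * (σ2 / h) * (t n - t (n - 1))

/-- Feasibility for the limited-buffer problem: nonnegative rates satisfying both
the transmission constraints `∑_{n=1}^j r_n T_n ≥ ∑_{n=1}^j D_n` and the buffer
constraints `∑_{n=1}^j r_n T_n ≤ ∑_{n=0}^{j−1} D_n + D_max`, for all `j = 1, …, N`. -/
def FeasibleLB (t D : ℕ → ℝ) (N : ℕ) (Dmax : ℝ) (r : ℕ → ℝ) : Prop :=
  (∀ n ∈ Finset.Icc 1 N, 0 ≤ r n) ∧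
  (∀ j ∈ Finset.Icc 1 N,
    ∑ n ∈ Finset.Icc 1 j, D n ≤ ∑ n ∈ Finset.Icc 1 j, r n * (t n - t (n - 1))) ∧
  (∀ j ∈ Finset.Icc 1 N,
    ∑ n ∈ Finset.Icc 1 j, r n * (t n - t (n - 1)) ≤ ∑ n ∈ Finset.range j, D n + Dmax)

open Finset Real

theorem sum_Icc_sub_pred {M : Type*} [AddCommGroup M] (t : ℕ → M) (j : ℕ) :
    ∑ n ∈ Icc 1 j, (t n - t (n - 1)) = t j - t 0 := by
  induction j with
  | zero => simp
  | succ k ih =>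
    rw [sum_Icc_succ_top (by omega), ih, Nat.add_sub_cancel]
    abel

theorem sum_mul_exp_div_le_sum_mul_exp {ι : Type*} {s : Finset ι} {w x : ι → ℝ} {a : ℝ}
    (hw : ∀ i ∈ s, 0 ≤ w i) (hs : 0 < ∑ i ∈ s, w i) (ha : a ≤ ∑ i ∈ s, w i * x i) :
    (∑ i ∈ s, w i) * exp (a / ∑ i ∈ s, w i) ≤ ∑ i ∈ s, w i * exp (x i) := by
  have jensen := convexOn_exp.map_centerMass_le hw hs fun i _ => Set.mem_univ (x i)
  simp only [centerMass, smul_eq_mul, Function.comp_def] at jensen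
  calc (∑ i ∈ s, w i) * exp (a / ∑ i ∈ s, w i)
      ≤ (∑ i ∈ s, w i) * exp ((∑ i ∈ s, w i)⁻¹ * ∑ i ∈ s, w i * x i) := by
        rw [div_eq_inv_mul]
        gcongr
    _ ≤ (∑ i ∈ s, w i) * ((∑ i ∈ s, w i)⁻¹ * ∑ i ∈ s, w i * exp (x i)) := by gcongr
    _ = ∑ i ∈ s, w i * exp (x i) := by field_simp

theorem energyLB_eq (B σ2 h : ℝ) (t : ℕ → ℝ) (N : ℕ) (r : ℕ → ℝ) :
    energyLB B σ2 h t N r =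
      σ2 / h * (∑ n ∈ Icc 1 N, (t n - t (n - 1)) * exp (r n / B) - (t N - t 0)) := by
  rw [energyLB, ← sum_Icc_sub_pred t N, ← sum_sub_distrib, mul_sum]
  exact sum_congr rfl fun n _ => by ring

theorem energyLB_ge_of_le_sum {B σ2 h a : ℝ} {t r : ℕ → ℝ} {N : ℕ} (hB : 0 < B)
    (hσh : 0 ≤ σ2 / h) (hT : ∀ n ∈ Icc 1 N, 0 ≤ t n - t (n - 1)) (htN : t 0 < t N)
    (ha : a ≤ ∑ n ∈ Icc 1 N, r n * (t n - t (n - 1))) :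
    (exp (a / (B * (t N - t 0))) - 1) * (σ2 / h) * (t N - t 0) ≤ energyLB B σ2 h t N r := by
  have hS := sum_Icc_sub_pred t N
  have ha' : a / B ≤ ∑ n ∈ Icc 1 N, (t n - t (n - 1)) * (r n / B) := by
    calc a / B ≤ (∑ n ∈ Icc 1 N, r n * (t n - t (n - 1))) / B := by gcongr
      _ = ∑ n ∈ Icc 1 N, (t n - t (n - 1)) * (r n / B) := by
        rw [sum_div]
        exact sum_congr rfl fun n _ => by ring
  have key := sum_mul_exp_div_le_sum_mul_exp hT (by linarith) ha'
  rw [hS, div_div] at key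
  rw [energyLB_eq]
  calc (exp (a / (B * (t N - t 0))) - 1) * (σ2 / h) * (t N - t 0)
      = σ2 / h * ((t N - t 0) * exp (a / (B * (t N - t 0))) - (t N - t 0)) := by ring
    _ ≤ _ := by gcongr

theorem feasibleLB_const {t D : ℕ → ℝ} {N : ℕ} {Dmax c : ℝ} (hc : 0 ≤ c) (ht0 : t 0 = 0)
    (hlo : ∀ j ∈ Icc 1 N, ∑ n ∈ Icc 1 j, D n ≤ c * t j)
    (hhi : ∀ j ∈ Icc 1 N, c * t j ≤ ∑ n ∈ range j, D n + Dmax) :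
    FeasibleLB t D N Dmax fun _ => c := by
  have hsum : ∀ j, ∑ n ∈ Icc 1 j, c * (t n - t (n - 1)) = c * t j := fun j => by
    rw [← mul_sum, sum_Icc_sub_pred, ht0, sub_zero]
  exact ⟨fun _ _ => hc, fun j hj => (hsum j).symm ▸ hlo j hj, fun j hj => (hsum j).symm ▸ hhi j hj⟩

theorem constant_rate_optimal_limited_buffer_general
    (N : ℕ) (hN : 1 ≤ N) (t D : ℕ → ℝ) (B σ2 h Dmax : ℝ)
    (hB : 0 < B) (hσ2 : 0 < σ2) (hh : 0 < h)
    (ht0 : t 0 = 0) (ht : ∀ n, n < N → t n < t (n + 1))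
    (hD : ∀ n ∈ Finset.Icc 1 N, 0 ≤ D n ∧ D n ≤ Dmax)
    (hdeg_lo : ∀ j ∈ Finset.Icc 1 N,
      ∑ n ∈ Finset.Icc 1 j, D n ≤ (∑ m ∈ Finset.Icc 1 N, D m) / t N * t j)
    (hdeg_hi : ∀ j ∈ Finset.Icc 1 N,
      (∑ m ∈ Finset.Icc 1 N, D m) / t N * t j ≤ ∑ n ∈ Finset.range j, D n + Dmax) :
    FeasibleLB t D N Dmax (fun _ => (∑ m ∈ Finset.Icc 1 N, D m) / t N) ∧
    ∀ r, FeasibleLB t D N Dmax r →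
      (Real.exp ((∑ m ∈ Finset.Icc 1 N, D m) / (B * t N)) - 1) * (σ2 / h) * t N
        ≤ energyLB B σ2 h t N r := by
  have hmono : StrictMonoOn t (Set.Iic N) := strictMonoOn_Iic_of_lt_succ ht
  have htN : t 0 < t N := hmono (Set.mem_Iic.2 N.zero_le) Set.self_mem_Iic (by omega)
  have hT : ∀ n ∈ Icc 1 N, 0 ≤ t n - t (n - 1) := fun n hn => by
    have hn := mem_Icc.1 hn
    exact sub_nonneg.2 <| hmono.monotoneOn (Set.mem_Iic.2 (by omega)) (Set.mem_Iic.2 hn.2)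
      (by omega)
  have hDsum : 0 ≤ ∑ m ∈ Icc 1 N, D m := sum_nonneg fun n hn => (hD n hn).1
  refine ⟨feasibleLB_const (div_nonneg hDsum (ht0 ▸ htN).le) ht0 hdeg_lo hdeg_hi, ?_⟩
  rintro r ⟨-, htrans, -⟩
  simpa only [ht0, sub_zero] using
    energyLB_ge_of_le_sum hB (by positivity) hT htN (htrans N (right_mem_Icc.2 hN))

/-- Constant-rate optimality in the degenerate limited-buffer case: if for every `j`,
`∑_{n=1}^j D_n ≤ (D/t_N) t_j ≤ ∑_{n=0}^{j−1} D_n + D_max` (where `D = ∑_{n=1}^N D_n`),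
then the constant rate vector `r_n = D/t_N` is feasible for the limited-buffer
problem, and every feasible rate vector consumes at least the energy
`(e^{D/(B t_N)} − 1)(σ²/h) t_N` of this constant policy. -/
theorem constant_rate_optimal_limited_buffer
    (N : ℕ) (hN : 1 ≤ N) (t D : ℕ → ℝ) (B σ2 h Dmax : ℝ)
    (hB : 0 < B) (hσ2 : 0 < σ2) (hh : 0 < h) (hDmax : 0 < Dmax)
    (ht0 : t 0 = 0) (ht : ∀ n, n < N → t n < t (n + 1))
    (hD0 : D 0 = 0)
    (hD : ∀ n ∈ Finset.Icc 1 N, 0 ≤ D n ∧ D n ≤ Dmax)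
    (hdeg_lo : ∀ j ∈ Finset.Icc 1 N,
      ∑ n ∈ Finset.Icc 1 j, D n ≤ (∑ m ∈ Finset.Icc 1 N, D m) / t N * t j)
    (hdeg_hi : ∀ j ∈ Finset.Icc 1 N,
      (∑ m ∈ Finset.Icc 1 N, D m) / t N * t j ≤ ∑ n ∈ Finset.range j, D n + Dmax) :
    FeasibleLB t D N Dmax (fun _ => (∑ m ∈ Finset.Icc 1 N, D m) / t N) ∧
    ∀ r, FeasibleLB t D N Dmax r →
      (Real.exp ((∑ m ∈ Finset.Icc 1 N, D m) / (B * t N)) - 1) * (σ2 / h) * t N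
        ≤ energyLB B σ2 h t N r :=
  constant_rate_optimal_limited_buffer_general N hN t D B σ2 h Dmax hB hσ2 hh ht0 ht hD hdeg_lo
    hdeg_hi
end

section
/- Theorem 1 (optimality of the first segment chosen by the string-pulling algorithm in the limited-buffer case): For j = 1, …, N define r_e[j] = (∑_{n=1}^j D_n)/t_j, r_f[j] = (∑_{n=0}^{j−1} D_n + D_max)/t_j, and the feasible interval 𝐫[j] = [r_e[j], r_f[j]]. Let u_b = max{u ≤ N : ⋂_{j=1}^u 𝐫[j] ≠ ∅}, and assume u_b < N. (Case 1, buffer-empty switch) If 𝐫[u_b+1] lies strictly below ⋂_{j=1}^{u_b} 𝐫[j], i.e., r_f[u_b+1] < max_{1 ≤ j ≤ u_b} r_e[j], let u_1 = max{u ≤ u_b : r_e[u] ∈ ⋂_{j=1}^{u_b} 𝐫[j]}; then every optimal rate vector r* for the limited-buffer energy-minimization problem satisfies r*_n = r_e[u_1] for all n = 1, …, u_1. (Case 2, buffer-full switch) If 𝐫[u_b+1] lies strictly above ⋂_{j=1}^{u_b} 𝐫[j], i.e., r_e[u_b+1] > min_{1 ≤ j ≤ u_b} r_f[j], let u_1 =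 max{u ≤ u_b : r_f[u] ∈ ⋂_{j=1}^{u_b} 𝐫[j]}; then every optimal rate vector r* satisfies r*_n = r_f[u_1] for all n = 1, …, u_1. -/
/-- The constant rate `r_e[j]` that empties the data buffer exactly at `t_j`. -/
noncomputable def rE (t D : ℕ → ℝ) (j : ℕ) : ℝ :=
  (∑ n ∈ Finset.Icc 1 j, D n) / t j

/-- The constant rate `r_f[j]` that fills the data buffer exactly at `t_j`. -/
noncomputable def rF (t D : ℕ → ℝ) (Dmax : ℝ) (j : ℕ) : ℝ :=
  (∑ n ∈ Finset.range j, D n + Dmax) / t j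

/-!
Write `A j` for the data an optimal schedule has transmitted by `t j`; feasibility keeps `A`
between the arrival curve and the buffer-full curve. Given a line `j ↦ c * t j` lying above the
arrival curve on `[0, K]` with `A K ≤ c * t K`, clip `A` by the line on `[0, K]`. The clipped
curve is again feasible, transmits the same total, and in every epoch its rate lies between the
original rate and `c`; comparing each energy term with the tangent of `exp` at `c` shows that it
is strictly cheaper unless nothing was clipped. Hence `A ≤ c * t` on `[0, K]`, and dually
`A ≥ c * t` below the buffer-full curve.

In the buffer-empty case take `c = r_e[u₁]` and `K = u_b + 1`: the violated buffer constraint at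
`u_b + 1` puts `A` below the line there, so `A ≤ c * t` up to `u_b + 1`; at `u₁` the arrival
curve touches the line, forcing `A u₁ = c * t u₁`, and the dual bound on `[0, u₁]` gives
`A = c * t` there, i.e. constant rate `c`. The buffer-full case is symmetric.
-/

open Finset Real

section MinMax

variable {α : Type*} [AddCommGroup α] [LinearOrder α] [IsOrderedAddMonoid α]

theorem min_sub_min_mem_uIcc (a b a' b' : α) :
    min a' b' - min a b ∈ Set.uIcc (a' - a) (b' - b) := by
  rcases le_total a b with hab | hba <;> rcases le_total a' b' with hab' | hba'
  · rw [min_eq_left hab, min_eq_left hab']; exact Set.left_mem_uIcc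
  · rw [min_eq_left hab, min_eq_right hba', Set.mem_uIcc]
    exact Or.inr ⟨sub_le_sub_left hab _, sub_le_sub_right hba' _⟩
  · rw [min_eq_right hba, min_eq_left hab', Set.mem_uIcc]
    exact Or.inl ⟨sub_le_sub_left hba _, sub_le_sub_right hab' _⟩
  · rw [min_eq_right hba, min_eq_right hba']; exact Set.right_mem_uIcc

theorem max_sub_max_mem_uIcc (a b a' b' : α) :
    max a' b' - max a b ∈ Set.uIcc (a' - a) (b' - b) := by
  rcases le_total a b with hab | hba <;> rcases le_total a' b' with hab' | hba'
  · rw [max_eq_right hab, max_eq_right hab']; exact Set.right_mem_uIcc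
  · rw [max_eq_right hab, max_eq_left hba', Set.mem_uIcc]
    exact Or.inr ⟨sub_le_sub_right hba' _, sub_le_sub_left hab _⟩
  · rw [max_eq_left hba, max_eq_right hab', Set.mem_uIcc]
    exact Or.inl ⟨sub_le_sub_right hab' _, sub_le_sub_left hba _⟩
  · rw [max_eq_left hba, max_eq_left hba']; exact Set.left_mem_uIcc

end MinMax

theorem Real.exp_mul_sub_lt_exp_sub_exp {c x y : ℝ} (hxy : x ≠ y) (hy : y ∈ Set.uIcc c x) :
    exp c * (x - y) < exp x - exp y := by
  have tangent : exp y * (x - y) < exp x - exp y := by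
    have hx : exp x = exp y * exp (x - y) := by rw [← exp_add, add_sub_cancel]
    nlinarith [add_one_lt_exp (sub_ne_zero.2 hxy), exp_pos y]
  have slope : exp c * (x - y) ≤ exp y * (x - y) := by
    rcases le_total c x with hcx | hxc
    · rw [Set.uIcc_of_le hcx] at hy
      exact mul_le_mul_of_nonneg_right (exp_le_exp.2 hy.1) (sub_nonneg.2 hy.2)
    · rw [Set.uIcc_of_ge hxc] at hy
      exact mul_le_mul_of_nonpos_right (exp_le_exp.2 hy.2) (sub_nonpos.2 hy.1)
  linarith

def transmitted (t r : ℕ → ℝ) (j : ℕ) : ℝ :=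
  ∑ n ∈ Icc 1 j, r n * (t n - t (n - 1))

@[simp]
theorem transmitted_zero (t r : ℕ → ℝ) : transmitted t r 0 = 0 := by
  simp [transmitted]

theorem transmitted_succ (t r : ℕ → ℝ) (j : ℕ) :
    transmitted t r (j + 1) = transmitted t r j + r (j + 1) * (t (j + 1) - t j) := by
  rw [transmitted, sum_Icc_succ_top (Nat.le_add_left 1 j), Nat.add_sub_cancel, transmitted]

theorem transmitted_congr {t r s : ℕ → ℝ} {j : ℕ} (h : ∀ n ∈ Icc 1 j, r n = s n) :
    transmitted t r j = transmitted t s j :=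
  sum_congr rfl fun n hn => by rw [h n hn]

section Epochs

variable {t : ℕ → ℝ} {N : ℕ}

theorem epoch_pos (ht : ∀ n < N, t n < t (n + 1)) {n : ℕ} (hn : n ∈ Icc 1 N) :
    0 < t n - t (n - 1) := by
  obtain ⟨h1, h2⟩ := mem_Icc.1 hn
  have := ht (n - 1) (by omega)
  rw [Nat.sub_add_cancel h1] at this
  exact sub_pos.2 this

theorem time_pos (ht0 : t 0 = 0) (ht : ∀ n < N, t n < t (n + 1)) {j : ℕ}
    (hj : j ∈ Icc 1 N) : 0 < t j := by
  obtain ⟨h1, h2⟩ := mem_Icc.1 hj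
  rw [← ht0]
  exact strictMonoOn_Iic_of_lt_succ (fun m hm => ht m hm) (Set.mem_Iic.2 (Nat.zero_le N))
    (Set.mem_Iic.2 h2) h1

theorem transmitted_nonneg (ht : ∀ n < N, t n < t (n + 1)) {r : ℕ → ℝ}
    (hr : ∀ n ∈ Icc 1 N, 0 ≤ r n) {j : ℕ} (hj : j ≤ N) : 0 ≤ transmitted t r j :=
  sum_nonneg fun n hn =>
    have hnN : n ∈ Icc 1 N := mem_Icc.2 ⟨(mem_Icc.1 hn).1, (mem_Icc.1 hn).2.trans hj⟩
    mul_nonneg (hr n hnN) (epoch_pos ht hnN).le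

theorem rate_eq_of_transmitted_eq (ht : ∀ n < N, t n < t (n + 1)) {r : ℕ → ℝ} {c : ℝ}
    {u : ℕ} (hu : u ≤ N) (h : ∀ j ≤ u, transmitted t r j = c * t j) :
    ∀ n ∈ Icc 1 u, r n = c := by
  intro n hn
  obtain ⟨m, rfl⟩ := Nat.exists_eq_add_of_le' (mem_Icc.1 hn).1
  have hm : m + 1 ≤ u := (mem_Icc.1 hn).2
  have hstep := h (m + 1) hm
  rw [transmitted_succ, h m (by omega)] at hstep
  exact mul_right_cancel₀ (sub_pos.2 (ht m (by omega))).ne' (by linarith)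

end Epochs

section Optimality

variable {t D : ℕ → ℝ} {N : ℕ} {B σ2 h Dmax : ℝ}

theorem energyLB_lt_of_mem_uIcc (hB : 0 < B) (hk : 0 < σ2 / h)
    (ht : ∀ n < N, t n < t (n + 1)) {a f : ℕ → ℝ} {c : ℝ}
    (htotal : transmitted t f N = transmitted t a N)
    (hf : ∀ n ∈ Icc 1 N, f n ∈ Set.uIcc c (a n)) (hne : ∃ n ∈ Icc 1 N, f n ≠ a n) :
    energyLB B σ2 h t N f < energyLB B σ2 h t N a := by
  set T : ℕ → ℝ := fun n => t n - t (n - 1)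
  have hlt : ∀ n ∈ Icc 1 N, f n ≠ a n →
      exp (c / B) * (a n / B - f n / B) * (σ2 / h) * T n
        < (exp (a n / B) - exp (f n / B)) * (σ2 / h) * T n := by
    intro n hn hfa
    have hscaled : f n / B ∈ Set.uIcc (c / B) (a n / B) := by
      rw [← Set.image_div_const_uIcc]; exact Set.mem_image_of_mem _ (hf n hn)
    have hdiv : a n / B ≠ f n / B := fun h' => hfa ((div_left_inj' hB.ne').1 h').symm
    exact mul_lt_mul_of_pos_right (mul_lt_mul_of_pos_right
      (exp_mul_sub_lt_exp_sub_exp hdiv hscaled) hk) (epoch_pos ht hn)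
  have hle : ∀ n ∈ Icc 1 N,
      exp (c / B) * (a n / B - f n / B) * (σ2 / h) * T n
        ≤ (exp (a n / B) - exp (f n / B)) * (σ2 / h) * T n := by
    intro n hn
    rcases eq_or_ne (f n) (a n) with hfa | hfa
    · simp [hfa]
    · exact (hlt n hn hfa).le
  have hsum := sum_lt_sum hle (hne.imp fun n ⟨hn, hfa⟩ => ⟨hn, hlt n hn hfa⟩)
  have hfirst : ∑ n ∈ Icc 1 N, exp (c / B) * (a n / B - f n / B) * (σ2 / h) * T n
      = exp (c / B) / B * (σ2 / h) * (transmitted t a N - transmitted t f N) := by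
    rw [transmitted, transmitted, ← sum_sub_distrib, mul_sum]
    exact sum_congr rfl fun n _ => by simp only [T]; field_simp
  have hsecond : ∑ n ∈ Icc 1 N, (exp (a n / B) - exp (f n / B)) * (σ2 / h) * T n
      = energyLB B σ2 h t N a - energyLB B σ2 h t N f := by
    rw [energyLB, energyLB, ← sum_sub_distrib]
    exact sum_congr rfl fun n _ => by ring
  rw [hfirst, hsecond, htotal, sub_self, mul_zero] at hsum
  linarith

theorem eqOn_of_optimal_of_mem_uIcc (hB : 0 < B) (hk : 0 < σ2 / h)
    (ht : ∀ n < N, t n < t (n + 1)) {a f : ℕ → ℝ} {c : ℝ}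
    (hopt : ∀ r, FeasibleLB t D N Dmax r → energyLB B σ2 h t N a ≤ energyLB B σ2 h t N r)
    (hf : FeasibleLB t D N Dmax f) (htotal : transmitted t f N = transmitted t a N)
    (hmem : ∀ n ∈ Icc 1 N, f n ∈ Set.uIcc c (a n)) :
    ∀ n ∈ Icc 1 N, f n = a n := by
  by_contra! hne
  exact (energyLB_lt_of_mem_uIcc hB hk ht htotal hmem hne).not_ge (hopt f hf)

theorem transmitted_eq_of_optimal (hB : 0 < B) (hk : 0 < σ2 / h)
    (ht : ∀ n < N, t n < t (n + 1)) {a : ℕ → ℝ} (ha : FeasibleLB t D N Dmax a)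
    (hopt : ∀ r, FeasibleLB t D N Dmax r → energyLB B σ2 h t N a ≤ energyLB B σ2 h t N r)
    {c : ℝ} (hc : 0 ≤ c) (Φ : ℕ → ℝ) (hΦ0 : Φ 0 = 0) (hΦN : Φ N = transmitted t a N)
    (hlow : ∀ j ∈ Icc 1 N, ∑ n ∈ Icc 1 j, D n ≤ Φ j)
    (hup : ∀ j ∈ Icc 1 N, Φ j ≤ ∑ n ∈ range j, D n + Dmax)
    (hstep : ∀ m < N, Φ (m + 1) - Φ m ∈
      Set.uIcc (c * (t (m + 1) - t m)) (transmitted t a (m + 1) - transmitted t a m)) :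
    ∀ j ≤ N, transmitted t a j = Φ j := by
  set f : ℕ → ℝ := fun n => (Φ n - Φ (n - 1)) / (t n - t (n - 1))
  have hfΦ : ∀ j ≤ N, transmitted t f j = Φ j := by
    intro j hj
    induction j with
    | zero => simp [hΦ0]
    | succ m ih =>
      rw [transmitted_succ, ih (by omega)]
      simp only [f, Nat.add_sub_cancel]
      field_simp [(sub_pos.2 (ht m (by omega))).ne']
      ring
  have hmem : ∀ n ∈ Icc 1 N, f n ∈ Set.uIcc c (a n) := by
    intro n hn
    obtain ⟨m, rfl⟩ := Nat.exists_eq_add_of_le' (mem_Icc.1 hn).1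
    have hm : m < N := (mem_Icc.1 hn).2
    have hT := (sub_pos.2 (ht m hm)).ne'
    have := Set.mem_image_of_mem (· / (t (m + 1) - t m)) (hstep m hm)
    rwa [Set.image_div_const_uIcc, transmitted_succ, add_sub_cancel_left,
      mul_div_cancel_right₀ _ hT, mul_div_cancel_right₀ _ hT] at this
  have hf : FeasibleLB t D N Dmax f := by
    refine ⟨fun n hn => (le_inf hc (ha.1 n hn)).trans (hmem n hn).1,
      fun j hj => ?_, fun j hj => ?_⟩
    · change _ ≤ transmitted t f j
      rw [hfΦ j (mem_Icc.1 hj).2]; exact hlow j hj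
    · change transmitted t f j ≤ _
      rw [hfΦ j (mem_Icc.1 hj).2]; exact hup j hj
  have hfa := eqOn_of_optimal_of_mem_uIcc hB hk ht hopt hf (by rw [hfΦ N le_rfl, hΦN]) hmem
  intro j hj
  rw [← hfΦ j hj]
  exact transmitted_congr fun n hn =>
    (hfa n (mem_Icc.2 ⟨(mem_Icc.1 hn).1, (mem_Icc.1 hn).2.trans hj⟩)).symm

theorem transmitted_le_of_optimal (hB : 0 < B) (hk : 0 < σ2 / h) (ht0 : t 0 = 0)
    (ht : ∀ n < N, t n < t (n + 1)) {a : ℕ → ℝ} (ha : FeasibleLB t D N Dmax a)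
    (hopt : ∀ r, FeasibleLB t D N Dmax r → energyLB B σ2 h t N a ≤ energyLB B σ2 h t N r)
    {c : ℝ} (hc : 0 ≤ c) {K : ℕ} (hK : K ≤ N)
    (hL : ∀ j ∈ Icc 1 K, ∑ n ∈ Icc 1 j, D n ≤ c * t j)
    (hAK : transmitted t a K ≤ c * t K) :
    ∀ j ≤ K, transmitted t a j ≤ c * t j := by
  set Φ : ℕ → ℝ := fun j =>
    if j ≤ K then min (transmitted t a j) (c * t j) else transmitted t a j
  have hΦ_of_ge : ∀ j, K ≤ j → Φ j = transmitted t a j := by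
    intro j hj
    simp only [Φ]
    split_ifs with hjK
    · obtain rfl := le_antisymm hjK hj
      exact min_eq_left hAK
    · rfl
  have hlow : ∀ j ∈ Icc 1 N, ∑ n ∈ Icc 1 j, D n ≤ Φ j := by
    intro j hj
    simp only [Φ]
    split_ifs with hjK
    · exact le_min (ha.2.1 j hj) (hL j (mem_Icc.2 ⟨(mem_Icc.1 hj).1, hjK⟩))
    · exact ha.2.1 j hj
  have hup : ∀ j ∈ Icc 1 N, Φ j ≤ ∑ n ∈ range j, D n + Dmax := by
    intro j hj
    simp only [Φ]
    split_ifs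
    · exact (min_le_left _ _).trans (ha.2.2 j hj)
    · exact ha.2.2 j hj
  have hstep : ∀ m < N, Φ (m + 1) - Φ m ∈
      Set.uIcc (c * (t (m + 1) - t m)) (transmitted t a (m + 1) - transmitted t a m) := by
    intro m _
    by_cases hmK : m + 1 ≤ K
    · simp only [Φ, if_pos hmK, if_pos (Nat.le_of_succ_le hmK), mul_sub]
      rw [Set.uIcc_comm]
      exact min_sub_min_mem_uIcc _ _ _ _
    · rw [hΦ_of_ge m (by omega), hΦ_of_ge (m + 1) (by omega)]
      exact Set.right_mem_uIcc
  have hAΦ := transmitted_eq_of_optimal hB hk ht ha hopt hc Φ (by simp [Φ, ht0])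
    (hΦ_of_ge N hK) hlow hup hstep
  intro j hj
  rw [hAΦ j (hj.trans hK)]
  simp only [Φ, if_pos hj]
  exact min_le_right _ _

theorem le_transmitted_of_optimal (hB : 0 < B) (hk : 0 < σ2 / h) (ht0 : t 0 = 0)
    (ht : ∀ n < N, t n < t (n + 1)) {a : ℕ → ℝ} (ha : FeasibleLB t D N Dmax a)
    (hopt : ∀ r, FeasibleLB t D N Dmax r → energyLB B σ2 h t N a ≤ energyLB B σ2 h t N r)
    {c : ℝ} (hc : 0 ≤ c) {K : ℕ} (hK : K ≤ N)
    (hU : ∀ j ∈ Icc 1 K, c * t j ≤ ∑ n ∈ range j, D n + Dmax)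
    (hAK : c * t K ≤ transmitted t a K) :
    ∀ j ≤ K, c * t j ≤ transmitted t a j := by
  set Φ : ℕ → ℝ := fun j =>
    if j ≤ K then max (transmitted t a j) (c * t j) else transmitted t a j
  have hΦ_of_ge : ∀ j, K ≤ j → Φ j = transmitted t a j := by
    intro j hj
    simp only [Φ]
    split_ifs with hjK
    · obtain rfl := le_antisymm hjK hj
      exact max_eq_left hAK
    · rfl
  have hlow : ∀ j ∈ Icc 1 N, ∑ n ∈ Icc 1 j, D n ≤ Φ j := by
    intro j hj
    simp only [Φ]
    split_ifs
    · exact (ha.2.1 j hj).trans (le_max_left _ _)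
    · exact ha.2.1 j hj
  have hup : ∀ j ∈ Icc 1 N, Φ j ≤ ∑ n ∈ range j, D n + Dmax := by
    intro j hj
    simp only [Φ]
    split_ifs with hjK
    · exact max_le (ha.2.2 j hj) (hU j (mem_Icc.2 ⟨(mem_Icc.1 hj).1, hjK⟩))
    · exact ha.2.2 j hj
  have hstep : ∀ m < N, Φ (m + 1) - Φ m ∈
      Set.uIcc (c * (t (m + 1) - t m)) (transmitted t a (m + 1) - transmitted t a m) := by
    intro m _
    by_cases hmK : m + 1 ≤ K
    · simp only [Φ, if_pos hmK, if_pos (Nat.le_of_succ_le hmK), mul_sub]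
      rw [Set.uIcc_comm]
      exact max_sub_max_mem_uIcc _ _ _ _
    · rw [hΦ_of_ge m (by omega), hΦ_of_ge (m + 1) (by omega)]
      exact Set.right_mem_uIcc
  have hAΦ := transmitted_eq_of_optimal hB hk ht ha hopt hc Φ (by simp [Φ, ht0])
    (hΦ_of_ge N hK) hlow hup hstep
  intro j hj
  rw [hAΦ j (hj.trans hK)]
  simp only [Φ, if_pos hj]
  exact le_max_right _ _

end Optimality

section Segments

variable {t D : ℕ → ℝ} {N : ℕ} {B σ2 h Dmax : ℝ} {a : ℕ → ℝ} {c : ℝ} {u K : ℕ}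

theorem rate_eq_of_touches_lower_bound (hB : 0 < B) (hk : 0 < σ2 / h) (ht0 : t 0 = 0)
    (ht : ∀ n < N, t n < t (n + 1)) (ha : FeasibleLB t D N Dmax a)
    (hopt : ∀ r, FeasibleLB t D N Dmax r → energyLB B σ2 h t N a ≤ energyLB B σ2 h t N r)
    (hu : u ∈ Icc 1 K) (hK : K ≤ N)
    (hL : ∀ j ∈ Icc 1 K, ∑ n ∈ Icc 1 j, D n ≤ c * t j)
    (hU : ∀ j ∈ Icc 1 u, c * t j ≤ ∑ n ∈ range j, D n + Dmax)
    (hAK : transmitted t a K ≤ c * t K) (hLu : c * t u ≤ ∑ n ∈ Icc 1 u, D n) :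
    ∀ n ∈ Icc 1 u, a n = c := by
  obtain ⟨hu1, huK⟩ := mem_Icc.1 hu
  have hc : 0 ≤ c := nonneg_of_mul_nonneg_left ((transmitted_nonneg ht ha.1 hK).trans hAK)
    (time_pos ht0 ht (mem_Icc.2 ⟨hu1.trans huK, hK⟩))
  have below := transmitted_le_of_optimal hB hk ht0 ht ha hopt hc hK hL hAK
  have above := le_transmitted_of_optimal hB hk ht0 ht ha hopt hc (huK.trans hK) hU
    (hLu.trans (ha.2.1 u (mem_Icc.2 ⟨hu1, huK.trans hK⟩)))
  exact rate_eq_of_transmitted_eq ht (huK.trans hK) fun j hj =>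
    le_antisymm (below j (hj.trans huK)) (above j hj)

theorem rate_eq_of_touches_upper_bound (hB : 0 < B) (hk : 0 < σ2 / h) (ht0 : t 0 = 0)
    (ht : ∀ n < N, t n < t (n + 1)) (ha : FeasibleLB t D N Dmax a)
    (hopt : ∀ r, FeasibleLB t D N Dmax r → energyLB B σ2 h t N a ≤ energyLB B σ2 h t N r)
    (hu : u ∈ Icc 1 K) (hK : K ≤ N)
    (hL : ∀ j ∈ Icc 1 u, ∑ n ∈ Icc 1 j, D n ≤ c * t j)
    (hU : ∀ j ∈ Icc 1 K, c * t j ≤ ∑ n ∈ range j, D n + Dmax)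
    (hAK : c * t K ≤ transmitted t a K) (hUu : ∑ n ∈ range u, D n + Dmax ≤ c * t u) :
    ∀ n ∈ Icc 1 u, a n = c := by
  obtain ⟨hu1, huK⟩ := mem_Icc.1 hu
  have hAu := (ha.2.2 u (mem_Icc.2 ⟨hu1, huK.trans hK⟩)).trans hUu
  have hc : 0 ≤ c :=
    nonneg_of_mul_nonneg_left ((transmitted_nonneg ht ha.1 (huK.trans hK)).trans hAu)
      (time_pos ht0 ht (mem_Icc.2 ⟨hu1, huK.trans hK⟩))
  have above := le_transmitted_of_optimal hB hk ht0 ht ha hopt hc hK hU hAK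
  have below := transmitted_le_of_optimal hB hk ht0 ht ha hopt hc (huK.trans hK) hL hAu
  exact rate_eq_of_transmitted_eq ht (huK.trans hK) fun j hj =>
    le_antisymm (below j hj) (above j (hj.trans huK))

variable {ub u1 : ℕ}

theorem optimal_rate_eq_rE_of_rF_succ_lt (hB : 0 < B) (hk : 0 < σ2 / h) (ht0 : t 0 = 0)
    (ht : ∀ n < N, t n < t (n + 1)) (ha : FeasibleLB t D N Dmax a)
    (hopt : ∀ r, FeasibleLB t D N Dmax r → energyLB B σ2 h t N a ≤ energyLB B σ2 h t N r)
    (hubN : ub < N) (hu1 : u1 ∈ Icc 1 ub)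
    (hrE : ∀ j ∈ Icc 1 ub, rE t D j ≤ rE t D u1 ∧ rE t D u1 ≤ rF t D Dmax j)
    (hlt : rF t D Dmax (ub + 1) < rE t D u1) :
    ∀ n ∈ Icc 1 u1, a n = rE t D u1 := by
  have hK : ub + 1 ∈ Icc 1 N := mem_Icc.2 ⟨Nat.le_add_left 1 ub, hubN⟩
  have hsub : Icc 1 ub ⊆ Icc 1 (ub + 1) := Icc_subset_Icc_right (Nat.le_succ ub)
  have hsub₁ : Icc 1 u1 ⊆ Icc 1 ub := Icc_subset_Icc_right (mem_Icc.1 hu1).2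
  have htpos : ∀ j ∈ Icc 1 (ub + 1), 0 < t j := fun j hj =>
    time_pos ht0 ht (Icc_subset_Icc_right hubN hj)
  have hover : ∑ n ∈ range (ub + 1), D n + Dmax < rE t D u1 * t (ub + 1) :=
    (div_lt_iff₀ (time_pos ht0 ht hK)).1 hlt
  have hAK := (ha.2.2 _ hK).trans hover.le
  refine rate_eq_of_touches_lower_bound hB hk ht0 ht ha hopt (hsub hu1) hubN (fun j hj => ?_)
    (fun j hj => ?_) hAK (div_mul_cancel₀ _ (htpos u1 (hsub hu1)).ne').le
  · rcases (mem_Icc.1 hj).2.lt_or_eq with hj' | rfl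
    · exact (div_le_iff₀ (htpos j hj)).1 (hrE j (mem_Icc.2 ⟨(mem_Icc.1 hj).1, by omega⟩)).1
    · exact (ha.2.1 _ hK).trans hAK
  · exact (le_div_iff₀ (htpos j (hsub (hsub₁ hj)))).1 (hrE j (hsub₁ hj)).2

theorem optimal_rate_eq_rF_of_lt_rE_succ (hB : 0 < B) (hk : 0 < σ2 / h) (ht0 : t 0 = 0)
    (ht : ∀ n < N, t n < t (n + 1)) (ha : FeasibleLB t D N Dmax a)
    (hopt : ∀ r, FeasibleLB t D N Dmax r → energyLB B σ2 h t N a ≤ energyLB B σ2 h t N r)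
    (hubN : ub < N) (hu1 : u1 ∈ Icc 1 ub)
    (hrF : ∀ j ∈ Icc 1 ub, rE t D j ≤ rF t D Dmax u1 ∧ rF t D Dmax u1 ≤ rF t D Dmax j)
    (hlt : rF t D Dmax u1 < rE t D (ub + 1)) :
    ∀ n ∈ Icc 1 u1, a n = rF t D Dmax u1 := by
  have hK : ub + 1 ∈ Icc 1 N := mem_Icc.2 ⟨Nat.le_add_left 1 ub, hubN⟩
  have hsub : Icc 1 ub ⊆ Icc 1 (ub + 1) := Icc_subset_Icc_right (Nat.le_succ ub)
  have hsub₁ : Icc 1 u1 ⊆ Icc 1 ub := Icc_subset_Icc_right (mem_Icc.1 hu1).2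
  have htpos : ∀ j ∈ Icc 1 (ub + 1), 0 < t j := fun j hj =>
    time_pos ht0 ht (Icc_subset_Icc_right hubN hj)
  have hunder : rF t D Dmax u1 * t (ub + 1) < ∑ n ∈ Icc 1 (ub + 1), D n :=
    (lt_div_iff₀ (time_pos ht0 ht hK)).1 hlt
  have hAK := hunder.le.trans (ha.2.1 _ hK)
  refine rate_eq_of_touches_upper_bound hB hk ht0 ht ha hopt (hsub hu1) hubN (fun j hj => ?_)
    (fun j hj => ?_) hAK (div_mul_cancel₀ _ (htpos u1 (hsub hu1)).ne').ge
  · exact (div_le_iff₀ (htpos j (hsub (hsub₁ hj)))).1 (hrF j (hsub₁ hj)).1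
  · rcases (mem_Icc.1 hj).2.lt_or_eq with hj' | rfl
    · exact (le_div_iff₀ (htpos j hj)).1 (hrF j (mem_Icc.2 ⟨(mem_Icc.1 hj).1, by omega⟩)).2
    · exact hAK.trans (ha.2.2 _ hK)

end Segments

theorem string_pulling_first_segment_limited_buffer_general
    (N : ℕ) (t D : ℕ → ℝ) (B σ2 h Dmax : ℝ)
    (hB : 0 < B) (hσ2 : 0 < σ2) (hh : 0 < h)
    (ht0 : t 0 = 0) (ht : ∀ n, n < N → t n < t (n + 1))
    (ub : ℕ) (hubN : ub < N) :
    -- Case 1 (buffer-empty switch): `𝐫[u_b+1]` lies strictly below the intersection.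
    ((∃ j ∈ Finset.Icc 1 ub, rF t D Dmax (ub + 1) < rE t D j) →
      ∀ u1 ∈ Finset.Icc 1 ub,
        (∀ j ∈ Finset.Icc 1 ub, rE t D j ≤ rE t D u1 ∧ rE t D u1 ≤ rF t D Dmax j) →
        (∀ u ∈ Finset.Icc 1 ub,
          (∀ j ∈ Finset.Icc 1 ub, rE t D j ≤ rE t D u ∧ rE t D u ≤ rF t D Dmax j) →
          u ≤ u1) →
        ∀ rstar, FeasibleLB t D N Dmax rstar →
          (∀ r, FeasibleLB t D N Dmax r →
            energyLB B σ2 h t N rstar ≤ energyLB B σ2 h t N r) →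
          ∀ n ∈ Finset.Icc 1 u1, rstar n = rE t D u1) ∧
    -- Case 2 (buffer-full switch): `𝐫[u_b+1]` lies strictly above the intersection.
    ((∃ j ∈ Finset.Icc 1 ub, rF t D Dmax j < rE t D (ub + 1)) →
      ∀ u1 ∈ Finset.Icc 1 ub,
        (∀ j ∈ Finset.Icc 1 ub, rE t D j ≤ rF t D Dmax u1 ∧ rF t D Dmax u1 ≤ rF t D Dmax j) →
        (∀ u ∈ Finset.Icc 1 ub,
          (∀ j ∈ Finset.Icc 1 ub, rE t D j ≤ rF t D Dmax u ∧ rF t D Dmax u ≤ rF t D Dmax j) →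
          u ≤ u1) →
        ∀ rstar, FeasibleLB t D N Dmax rstar →
          (∀ r, FeasibleLB t D N Dmax r →
            energyLB B σ2 h t N rstar ≤ energyLB B σ2 h t N r) →
          ∀ n ∈ Finset.Icc 1 u1, rstar n = rF t D Dmax u1) := by
  have hk : 0 < σ2 / h := div_pos hσ2 hh
  constructor
  · rintro ⟨j, hj, hbelow⟩ u1 hu1 hrE - rstar hfeas hopt
    exact optimal_rate_eq_rE_of_rF_succ_lt hB hk ht0 ht hfeas hopt hubN hu1 hrE
      (hbelow.trans_le (hrE j hj).1)
  · rintro ⟨j, hj, habove⟩ u1 hu1 hrF - rstar hfeas hopt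
    exact optimal_rate_eq_rF_of_lt_rE_succ hB hk ht0 ht hfeas hopt hubN hu1 hrF
      ((hrF j hj).2.trans_lt habove)

/-- Theorem 1 (optimality of the first segment chosen by the string-pulling algorithm
in the limited-buffer case). Let `u_b` be the largest `u` such that the intersection
`⋂_{j=1}^u [r_e[j], r_f[j]]` of feasible constant-rate ranges is nonempty, and assume
`u_b < N`. If the next range `𝐫[u_b+1]` falls strictly below the intersection
(some `r_e[j] > r_f[u_b+1]`), then with `u_1` the largest `u ≤ u_b` such that
`r_e[u]` lies in the intersection, every optimal rate vector uses the constant rate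
`r_e[u_1]` throughout epochs `1, …, u_1`; symmetrically, if `𝐫[u_b+1]` falls strictly
above the intersection, every optimal rate vector uses `r_f[u_1]` with `u_1` the
largest index such that `r_f[u_1]` lies in the intersection. -/
theorem string_pulling_first_segment_limited_buffer
    (N : ℕ) (t D : ℕ → ℝ) (B σ2 h Dmax : ℝ)
    (hB : 0 < B) (hσ2 : 0 < σ2) (hh : 0 < h) (hDmax : 0 < Dmax)
    (ht0 : t 0 = 0) (ht : ∀ n, n < N → t n < t (n + 1))
    (hD0 : D 0 = 0)
    (hD : ∀ n ∈ Finset.Icc 1 N, 0 ≤ D n ∧ D n ≤ Dmax)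
    (hfeasne : ∃ r, FeasibleLB t D N Dmax r)
    (ub : ℕ) (hub1 : 1 ≤ ub) (hubN : ub < N)
    -- `⋂_{j=1}^{u_b} 𝐫[j]` is nonempty …
    (hub_ne : ∃ r : ℝ, ∀ j ∈ Finset.Icc 1 ub, rE t D j ≤ r ∧ r ≤ rF t D Dmax j)
    -- … and `u_b` is maximal with this property.
    (hub_max : ¬ ∃ r : ℝ, ∀ j ∈ Finset.Icc 1 (ub + 1), rE t D j ≤ r ∧ r ≤ rF t D Dmax j) :
    -- Case 1 (buffer-empty switch): `𝐫[u_b+1]` lies strictly below the intersection.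
    ((∃ j ∈ Finset.Icc 1 ub, rF t D Dmax (ub + 1) < rE t D j) →
      ∀ u1 ∈ Finset.Icc 1 ub,
        (∀ j ∈ Finset.Icc 1 ub, rE t D j ≤ rE t D u1 ∧ rE t D u1 ≤ rF t D Dmax j) →
        (∀ u ∈ Finset.Icc 1 ub,
          (∀ j ∈ Finset.Icc 1 ub, rE t D j ≤ rE t D u ∧ rE t D u ≤ rF t D Dmax j) →
          u ≤ u1) →
        ∀ rstar, FeasibleLB t D N Dmax rstar →
          (∀ r, FeasibleLB t D N Dmax r →
            energyLB B σ2 h t N rstar ≤ energyLB B σ2 h t N r) →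
          ∀ n ∈ Finset.Icc 1 u1, rstar n = rE t D u1) ∧
    -- Case 2 (buffer-full switch): `𝐫[u_b+1]` lies strictly above the intersection.
    ((∃ j ∈ Finset.Icc 1 ub, rF t D Dmax j < rE t D (ub + 1)) →
      ∀ u1 ∈ Finset.Icc 1 ub,
        (∀ j ∈ Finset.Icc 1 ub, rE t D j ≤ rF t D Dmax u1 ∧ rF t D Dmax u1 ≤ rF t D Dmax j) →
        (∀ u ∈ Finset.Icc 1 ub,
          (∀ j ∈ Finset.Icc 1 ub, rE t D j ≤ rF t D Dmax u ∧ rF t D Dmax u ≤ rF t D Dmax j) →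
          u ≤ u1) →
        ∀ rstar, FeasibleLB t D N Dmax rstar →
          (∀ r, FeasibleLB t D N Dmax r →
            energyLB B σ2 h t N rstar ≤ energyLB B σ2 h t N r) →
          ∀ n ∈ Finset.Icc 1 u1, rstar n = rF t D Dmax u1) :=
  string_pulling_first_segment_limited_buffer_general N t D B σ2 h Dmax hB hσ2 hh ht0 ht ub hubN
end
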